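/- Let p ≥ 2, ℓ ≥ 0, let Λ ∈ ℝ^{p×p} be strictly lower triangular (Λ_{ij} = 0 whenever i ≤ j), let Γ ∈ ℝ^{p×ℓ}, and let S ⊆ {1,…,ℓ} be such that Γ_{1,j} = 0 for all j ∉ S. Define B = (I_p − Λ)^{-1}(I_p | Γ) ∈ ℝ^{p×(p+ℓ)}, and set Λ' = Λ_{2:,2:} (delete first row and column of Λ), Γ' = the submatrix of Γ consisting of rows 2,…,p and the columns with index not in S, and B' = (I_{p−1} − Λ')^{-1}(I_{p−1} | Γ'). Then B' equals the submatrix of B obtained by deleting the first row and deleting the columns with indices in {1} ∪ {p + j : j ∈ S}. -/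

import Mathlib

/-!
Because node `1` is a source, the first row of `I - Λ` is the first unit row. The inverse then
has the same first row, and deleting that row and column commutes with inversion. The kept columns
of `(I | Γ)` vanish in the first row, because `Γ 1 j = 0` for `j ∉ S`, so in the product with
`(I - Λ)⁻¹` only the lower-right block contributes, and that block is `(I - Λ')⁻¹`.
-/

namespace Matrix

variable {ι R : Type*} [CommRing R]

theorem det_one_sub_eq_one_of_strictLowerTriangular [Fintype ι] [LinearOrder ι] [DecidableEq ι]
    {Λ : Matrix ι ι R} (hΛ : ∀ i j, i ≤ j → Λ i j = 0) : (1 - Λ).det = 1 := by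
  rw [det_of_isLowerTriangular _ fun i j hij => ?_]
  · simp [hΛ _ _ le_rfl]
  · have hij : i < j := hij
    simp [one_apply_ne hij.ne, hΛ i j hij.le]

theorem inv_row_eq_one_row [Fintype ι] [DecidableEq ι] {M : Matrix ι ι R} {i : ι}
    (hM : IsUnit M.det) (h : M i = (1 : Matrix ι ι R) i) : M⁻¹ i = (1 : Matrix ι ι R) i := by
  ext k
  have := congrFun (congrFun (M.mul_nonsing_inv hM) i) k
  rwa [mul_apply, h, Fintype.sum_eq_single i fun m hm => by simp [one_apply_ne' hm], one_apply_eq,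
    one_mul] at this

theorem submatrix_mul_eq_of_row_zero_eq_zero {κ μ ν ξ : Type*} {n : ℕ}
    (A : Matrix κ (Fin (n + 1)) R) {N : Matrix (Fin (n + 1)) μ R} (e : ξ → κ) (f : ν → μ)
    (hN : ∀ j, N 0 (f j) = 0) :
    (A * N).submatrix e f = A.submatrix e Fin.succ * N.submatrix Fin.succ f := by
  ext i j
  simp [mul_apply, Fin.sum_univ_succ, hN]

theorem inv_submatrix_succ_of_row_zero_eq_one_row {n : ℕ}
    {M : Matrix (Fin (n + 1)) (Fin (n + 1)) R} (hM : IsUnit M.det)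
    (h : M 0 = (1 : Matrix (Fin (n + 1)) (Fin (n + 1)) R) 0) :
    (M.submatrix Fin.succ Fin.succ)⁻¹ = M⁻¹.submatrix Fin.succ Fin.succ := by
  refine inv_eq_right_inv ?_
  rw [← submatrix_mul_eq_of_row_zero_eq_zero M _ _ fun j => by
    simp [inv_row_eq_one_row hM h, one_apply_ne (Fin.succ_ne_zero j).symm],
    mul_nonsing_inv M hM, submatrix_one _ (Fin.succ_injective n)]

end Matrix

open Matrix

noncomputable def pathMatrix {R m κ : Type*} [CommRing R] [Fintype m] [DecidableEq m]
    (Λ : Matrix m m R) (Γ : Matrix m κ R) : Matrix m (m ⊕ κ) R :=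
  (1 - Λ)⁻¹ * fromCols 1 Γ

theorem pathMatrix_submatrix_succ {R κ ν : Type*} [CommRing R] {n : ℕ}
    {Λ : Matrix (Fin (n + 1)) (Fin (n + 1)) R} (hΛ : ∀ i j, i ≤ j → Λ i j = 0)
    {Γ : Matrix (Fin (n + 1)) κ R} {c : ν → κ} (hc : ∀ j, Γ 0 (c j) = 0) :
    pathMatrix (Λ.submatrix Fin.succ Fin.succ) (Γ.submatrix Fin.succ c) =
      (pathMatrix Λ Γ).submatrix Fin.succ (Sum.map Fin.succ c) := by
  have hrow : (1 - Λ) 0 = (1 : Matrix (Fin (n + 1)) (Fin (n + 1)) R) 0 := by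
    ext k
    simp [hΛ 0 k (Fin.zero_le k)]
  have hdet : IsUnit (1 - Λ).det := by
    simp [det_one_sub_eq_one_of_strictLowerTriangular hΛ]
  have hsource : ∀ j, fromCols 1 Γ 0 (Sum.map (Fin.succ (n := n)) c j) = 0 := by
    rintro (j | j)
    · simp [one_apply_ne (Fin.succ_ne_zero j).symm]
    · exact hc j
  rw [pathMatrix, pathMatrix, submatrix_mul_eq_of_row_zero_eq_zero _ _ _ hsource,
    ← inv_submatrix_succ_of_row_zero_eq_one_row hdet hrow]
  congr 2
  · ext i j
    simp [one_apply, Fin.succ_inj]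
  · ext i (j | j) <;> simp [one_apply, Fin.succ_inj]

/-- Lemma 4.3 (core matrix identity): if node `1` is a source whose latent parents are
indexed by `S` (i.e. `Γ_{1,j} = 0` for `j ∉ S`), then the path matrix
`B' = (I − Λ')⁻¹ (I | Γ')` of the reduced model (first observed variable and the latents
in `S` deleted) equals the submatrix of `B = (I − Λ)⁻¹ (I | Γ)` obtained by deleting the
first row and the columns for variable `1` and the latents in `S`. -/
theorem reduced_path_matrix_is_submatrix
    (p ℓ : ℕ) (hp : 2 ≤ p)
    (Λ : Matrix (Fin p) (Fin p) ℝ) (hΛ : ∀ i j : Fin p, i ≤ j → Λ i j = 0)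
    (Γ : Matrix (Fin p) (Fin ℓ) ℝ)
    (S : Finset (Fin ℓ))
    (hS : ∀ j ∉ S, Γ (⟨0, by omega⟩ : Fin p) j = 0) :
    (1 - Λ.submatrix
        (fun i : Fin (p - 1) => (⟨i.1 + 1, by have := i.isLt; omega⟩ : Fin p))
        (fun i : Fin (p - 1) => (⟨i.1 + 1, by have := i.isLt; omega⟩ : Fin p)))⁻¹ *
      Matrix.fromCols 1
        (Matrix.of fun (i : Fin (p - 1)) (j : {j : Fin ℓ // j ∉ S}) =>
          Γ (⟨i.1 + 1, by have := i.isLt; omega⟩ : Fin p) j.1)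
    = ((1 - Λ)⁻¹ * Matrix.fromCols 1 Γ).submatrix
        (fun i : Fin (p - 1) => (⟨i.1 + 1, by have := i.isLt; omega⟩ : Fin p))
        (Sum.map (fun i : Fin (p - 1) => (⟨i.1 + 1, by have := i.isLt; omega⟩ : Fin p))
          (fun j : {j : Fin ℓ // j ∉ S} => j.1)) := by
  obtain ⟨n, rfl⟩ : ∃ n, p = n + 1 := ⟨p - 1, by omega⟩
  exact pathMatrix_submatrix_succ hΛ fun j => hS j.1 j.2
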